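/- For every n ≥ 3, if A, B, C are distinct geometric hyperplanes of the incidence geometry G_n with A ∩ B ⊆ C, then A ∩ B = A ∩ C; consequently G_n has Veldkamp lines. -/

import Mathlib

/-!
Every geometric hyperplane `H` is cut out of `P n` by a function `ε Q₀ + ⟨p, ·⟩`: condition (H1)
makes the indicator of `P n \ H` additive on perpendicular pairs, hence its polar form is a
multiple `ε ⟨·, ·⟩` of the symplectic form, and subtracting `ε Q₀` leaves a linear functional.
These functions form a group; the sign character `χ` sums to `0` over a nonzero linear one and to
`±2ⁿ` over a quadratic one.

Let `F_A, F_B, F_C` be the functions of `A, B, C`. If `F_C = F_A + F_B`, then `A ∩ B = A ∩ C`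
directly. Otherwise all seven nonempty sums of `F_A, F_B, F_C` are nonzero, and summing
`(1 + χ F_A)(1 + χ F_B)(1 - χ F_C)` shows that `A ∩ B \ C` has at least `(4ⁿ - 7·2ⁿ)/8 > 0`
points once `n ≥ 3`.
-/

/-- The symplectic vector space `V_n = (ZMod 2)^(2n)` of the n-qubit real Pauli group. -/
abbrev V (n : ℕ) : Type := Fin (2 * n) → ZMod 2

/-- The index `2i-1` (0-based: `2i`). -/
def i0 {n : ℕ} (i : Fin n) : Fin (2 * n) := ⟨2 * i.1, by have := i.isLt; omega⟩

/-- The index `2i` (0-based: `2i+1`). -/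
def i1 {n : ℕ} (i : Fin n) : Fin (2 * n) := ⟨2 * i.1 + 1, by have := i.isLt; omega⟩

/-- The symplectic form `⟨x,y⟩ = Σ_{i=1}^n (x_{2i−1} y_{2i} + x_{2i} y_{2i−1})`. -/
def sform {n : ℕ} (x y : V n) : ZMod 2 :=
  ∑ i : Fin n, (x (i0 i) * y (i1 i) + x (i1 i) * y (i0 i))

/-- The point set `P = V_n \ {0}` of the incidence geometry `G_n`. -/
def P (n : ℕ) : Set (V n) := {x | x ≠ 0}

/-- The line set `L = {{a,b,a+b} : a,b ∈ P, a ≠ b, ⟨a,b⟩ = 0}` of `G_n`. -/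
def Lines (n : ℕ) : Set (Set (V n)) :=
  {l | ∃ a b : V n, a ∈ P n ∧ b ∈ P n ∧ a ≠ b ∧ sform a b = 0 ∧ l = {a, b, a + b}}

/-- A subset `H ⊆ P` satisfies condition (H1) if every line meets it in exactly
one point or is contained in it. -/
def IsH1 {n : ℕ} (H : Set (V n)) : Prop :=
  H ⊆ P n ∧ ∀ l ∈ Lines n, (H ∩ l).ncard = 1 ∨ l ⊆ H

/-- A geometric hyperplane: a subset satisfying (H1) which is not the full point set. -/
def IsHyperplane {n : ℕ} (H : Set (V n)) : Prop := IsH1 H ∧ H ≠ P n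

/-- `A ⊞ B`: the complement in `P` of the symmetric difference of `A` and `B`. -/
def boxAdd {n : ℕ} (A B : Set (V n)) : Set (V n) := P n \ (symmDiff A B)

/-- The quadratic form `Q_0(x) = Σ_{i=1}^n x_{2i−1} x_{2i}`. -/
def Q0 {n : ℕ} (x : V n) : ZMod 2 := ∑ i : Fin n, x (i0 i) * x (i1 i)

/-- The quadratic form `Q_p(x) = Q_0(x) + ⟨p,x⟩`. -/
def Qf {n : ℕ} (p x : V n) : ZMod 2 := Q0 x + sform p x

/-- The perp-set hyperplane `C_p = {x ∈ P : ⟨p,x⟩ = 0}`. -/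
def Cset {n : ℕ} (p : V n) : Set (V n) := {x ∈ P n | sform p x = 0}

/-- The quadric hyperplane `H_p = {x ∈ P : Q_p(x) = 0}`. -/
def Hset {n : ℕ} (p : V n) : Set (V n) := {x ∈ P n | Qf p x = 0}

/-- The symplectic transvection `t_p : x ↦ x + ⟨p,x⟩·p`. -/
def tv {n : ℕ} (p : V n) (x : V n) : V n := x + sform p x • p

lemma zmod_two_eq_zero_or_one (a : ZMod 2) : a = 0 ∨ a = 1 := by
  revert a; decide

section Coordinates
variable {n : ℕ}

def pairEquiv (n : ℕ) : Fin n × Fin 2 ≃ Fin (2 * n) :=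
  finProdFinEquiv.trans (finCongr (Nat.mul_comm n 2))

lemma pairEquiv_zero (i : Fin n) : pairEquiv n (i, 0) = i0 i := by
  ext; simp [pairEquiv, i0]

lemma pairEquiv_one (i : Fin n) : pairEquiv n (i, 1) = i1 i := by
  ext; simp [pairEquiv, i1, add_comm]

lemma sum_eq_sum_i0_add_i1 {M : Type*} [AddCommMonoid M] (F : Fin (2 * n) → M) :
    ∑ j, F j = ∑ i : Fin n, (F (i0 i) + F (i1 i)) := by
  rw [← (pairEquiv n).sum_comp, Fintype.sum_prod_type]
  simp only [Fin.sum_univ_two, pairEquiv_zero, pairEquiv_one]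

/-- The involution of `Fin (2 * n)` exchanging the two coordinates of each hyperbolic pair. -/
def swapPair (n : ℕ) : Equiv.Perm (Fin (2 * n)) :=
  (pairEquiv n).permCongr ((Equiv.refl (Fin n)).prodCongr (Equiv.addRight 1))

lemma swapPair_pairEquiv (i : Fin n) (b : Fin 2) :
    swapPair n (pairEquiv n (i, b)) = pairEquiv n (i, b + 1) := by
  simp [swapPair, Equiv.permCongr_apply]

lemma swapPair_swapPair (j : Fin (2 * n)) : swapPair n (swapPair n j) = j := by
  obtain ⟨⟨i, b⟩, rfl⟩ := (pairEquiv n).surjective j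
  rw [swapPair_pairEquiv, swapPair_pairEquiv]
  congr 2
  fin_cases b <;> rfl

lemma sform_eq_sum_swapPair (x y : V n) : sform x y = ∑ j, x (swapPair n j) * y j := by
  rw [sum_eq_sum_i0_add_i1, sform]
  refine Finset.sum_congr rfl fun i _ => ?_
  rw [← pairEquiv_zero, ← pairEquiv_one, swapPair_pairEquiv, swapPair_pairEquiv, zero_add,
    show (1 : Fin 2) + 1 = 0 from rfl]
  ring

end Coordinates

section Symplectic
variable {n : ℕ}

lemma sform_comm (x y : V n) : sform x y = sform y x := by
  simp only [sform]; congr! 1 with i; ring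

lemma sform_self (x : V n) : sform x x = 0 := by
  simp only [sform, mul_comm (x (i1 _)), ZModModule.add_self, Finset.sum_const_zero]

lemma sform_add_left (x x' y : V n) : sform (x + x') y = sform x y + sform x' y := by
  simp only [sform, Pi.add_apply, ← Finset.sum_add_distrib]; congr! 1 with i; ring

lemma sform_add_right (x y y' : V n) : sform x (y + y') = sform x y + sform x y' := by
  rw [sform_comm, sform_add_left, sform_comm y, sform_comm y']

lemma Q0_add (x y : V n) : Q0 (x + y) = Q0 x + Q0 y + sform x y := by
  simp only [Q0, sform, Pi.add_apply, ← Finset.sum_add_distrib]; congr! 1 with i; ring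

lemma exists_sform_eq (g : V n →+ ZMod 2) : ∃ p : V n, ∀ x, g x = sform p x := by
  refine ⟨fun j => g (Pi.single (swapPair n j) 1), fun x => ?_⟩
  simp only [sform_eq_sum_swapPair, swapPair_swapPair]
  conv_lhs => rw [← Finset.univ_sum_single x, map_sum]
  refine Finset.sum_congr rfl fun j _ => ?_
  calc g (Pi.single j (x j)) = g.toZModLinearMap 2 (x j • Pi.single j 1) := by
        rw [← Pi.single_smul', smul_eq_mul, mul_one]; rfl
    _ = g (Pi.single j 1) * x j := by rw [map_smul, smul_eq_mul, mul_comm]; rfl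

end Symplectic

section HyperplaneFunctions
variable {n : ℕ}

/-- The values at `(0, p)` and `(1, p)` cut `Cset p` and `Hset p` out of `P n`. -/
def hypFun (n : ℕ) : ZMod 2 × V n →+ (V n → ZMod 2) :=
  AddMonoidHom.mk' (fun q x => q.1 * Q0 x + sform q.2 x) fun q q' => by
    funext x; simp only [Prod.fst_add, Prod.snd_add, sform_add_left, Pi.add_apply]; ring

lemma hypFun_apply (q : ZMod 2 × V n) (x : V n) : hypFun n q x = q.1 * Q0 x + sform q.2 x :=
  rfl

lemma apply_zero_of_mem_range {F : V n → ZMod 2} (hF : F ∈ (hypFun n).range) : F 0 = 0 := by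
  obtain ⟨q, rfl⟩ := hF
  simp [hypFun_apply, Q0, sform]

end HyperplaneFunctions

section Polar
variable {G : Type*} [AddCommGroup G] (f : G → ZMod 2)

def polar (x y : G) : ZMod 2 := f (x + y) + f x + f y

lemma polar_comm (x y : G) : polar f x y = polar f y x := by
  simp only [polar, add_comm x y]; ring

lemma polar_add_right (x y z : G) :
    polar f x (y + z) = polar f (x + y) z + polar f x y + polar f y z := by
  simp only [polar, add_assoc]; grind

lemma polar_self [Module (ZMod 2) G] (h0 : f 0 = 0) (x : G) : polar f x x = 0 := by
  simp only [polar, ZModModule.add_self, h0, add_assoc]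

lemma polar_zero_left (h0 : f 0 = 0) (y : G) : polar f 0 y = 0 := by
  simp only [polar, zero_add, h0, add_zero, ZModModule.add_self]

end Polar

def PerpAdditive {n : ℕ} (f : V n → ZMod 2) : Prop :=
  ∀ x y, sform x y = 0 → f (x + y) = f x + f y

namespace PerpAdditive
variable {n : ℕ} {f : V n → ZMod 2} (hf : PerpAdditive f)
include hf

lemma apply_zero : f 0 = 0 := by
  simpa using hf 0 0 (by simp [sform])

lemma polar_eq_zero_of_sform_eq_zero {x y : V n} (h : sform x y = 0) : polar f x y = 0 := by
  rw [polar, hf x y h]; grind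

lemma polar_add_right_of_sform_eq_zero {x y z : V n} (hxz : sform x z = 0) (hyz : sform y z = 0) :
    polar f x (y + z) = polar f x y := by
  have hxyz : sform (x + y) z = 0 := by rw [sform_add_left, hxz, hyz, add_zero]
  rw [polar_add_right, hf.polar_eq_zero_of_sform_eq_zero hxyz,
    hf.polar_eq_zero_of_sform_eq_zero hyz, zero_add, add_zero]

lemma polar_add_right_of_sform_eq_one {x y z : V n} (hxy : sform x y = 1) (hxz : sform x z = 0) :
    polar f x (y + z) = polar f x y := by
  rcases zmod_two_eq_zero_or_one (sform y z) with hyz | hyz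
  · exact hf.polar_add_right_of_sform_eq_zero hxz hyz
  -- Trade `z` for `z + x`, which is perpendicular to `y`; the extra `x` is absorbed by `polar f x`.
  have hxzx : sform x (z + x) = 0 := by rw [sform_add_right, hxz, sform_self, add_zero]
  have hyzx : sform y (z + x) = 0 := by
    rw [sform_add_right, hyz, sform_comm, hxy, ZModModule.add_self]
  have h0 := hf.apply_zero
  calc polar f x (y + z) = polar f x (x + (y + (z + x))) := by
        rw [show x + (y + (z + x)) = y + z + (x + x) by abel, ZModModule.add_self, add_zero]
    _ = polar f x (y + (z + x)) := by
        rw [polar_add_right, ZModModule.add_self, polar_zero_left f h0, polar_self f h0, zero_add,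
          zero_add]
    _ = polar f x y := hf.polar_add_right_of_sform_eq_zero hxzx hyzx

lemma polar_eq_of_sform_eq_one_right {x y y' : V n} (hy : sform x y = 1) (hy' : sform x y' = 1) :
    polar f x y = polar f x y' := by
  have hyy' : sform x (y + y') = 0 := by rw [sform_add_right, hy, hy', ZModModule.add_self]
  rw [← hf.polar_add_right_of_sform_eq_one hy hyy', ← add_assoc, ZModModule.add_self, zero_add]

lemma polar_eq_of_sform_eq_one_left {x x' y : V n} (hx : sform x y = 1) (hx' : sform x' y = 1) :
    polar f x y = polar f x' y := by
  rw [polar_comm, polar_comm f x']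
  exact hf.polar_eq_of_sform_eq_one_right (by rwa [sform_comm]) (by rwa [sform_comm])

lemma polar_eq_of_sform_eq_one {x y x' y' : V n} (h : sform x y = 1) (h' : sform x' y' = 1) :
    polar f x y = polar f x' y' := by
  rcases zmod_two_eq_zero_or_one (sform x y') with hxy' | hxy'
  · rcases zmod_two_eq_zero_or_one (sform x' y) with hx'y | hx'y
    · have hx : sform x (y + y') = 1 := by rw [sform_add_right, h, hxy', add_zero]
      have hx' : sform x' (y + y') = 1 := by rw [sform_add_right, hx'y, h', zero_add]
      calc polar f x y = polar f x (y + y') := hf.polar_eq_of_sform_eq_one_right h hx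
        _ = polar f x' (y + y') := hf.polar_eq_of_sform_eq_one_left hx hx'
        _ = polar f x' y' := hf.polar_eq_of_sform_eq_one_right hx' h'
    · exact (hf.polar_eq_of_sform_eq_one_left h hx'y).trans
        (hf.polar_eq_of_sform_eq_one_right hx'y h')
  · exact (hf.polar_eq_of_sform_eq_one_right h hxy').trans
      (hf.polar_eq_of_sform_eq_one_left hxy' h')

lemma exists_polar_eq_mul_sform : ∃ ε : ZMod 2, ∀ x y, polar f x y = ε * sform x y := by
  by_cases hhyp : ∃ x₀ y₀ : V n, sform x₀ y₀ = 1
  · obtain ⟨x₀, y₀, h₀⟩ := hhyp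
    refine ⟨polar f x₀ y₀, fun x y => ?_⟩
    rcases zmod_two_eq_zero_or_one (sform x y) with h | h
    · rw [h, mul_zero, hf.polar_eq_zero_of_sform_eq_zero h]
    · rw [h, mul_one, hf.polar_eq_of_sform_eq_one h h₀]
  · push Not at hhyp
    refine ⟨0, fun x y => ?_⟩
    have h : sform x y = 0 := (zmod_two_eq_zero_or_one _).resolve_right (hhyp x y)
    rw [zero_mul, hf.polar_eq_zero_of_sform_eq_zero h]

lemma mem_range_hypFun : f ∈ (hypFun n).range := by
  obtain ⟨ε, hε⟩ := hf.exists_polar_eq_mul_sform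
  -- `Q0` has polar form `sform`, so `f + ε • Q0` is additive.
  let g : V n →+ ZMod 2 := AddMonoidHom.mk' (fun x => f x + ε * Q0 x) fun x y => by
    have hxy := hε x y
    simp only [polar] at hxy
    rw [Q0_add]; grind
  obtain ⟨p, hp⟩ := exists_sform_eq g
  refine ⟨(ε, p), funext fun x => ?_⟩
  have hx := hp x
  simp only [g, AddMonoidHom.mk'_apply] at hx
  rw [hypFun_apply, ← hx]; grind

end PerpAdditive

section Hyperplanes
variable {n : ℕ} {H : Set (V n)}

noncomputable def outsideIndicator (H : Set (V n)) : V n → ZMod 2 := (P n \ H).indicator 1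

lemma outsideIndicator_apply_eq_zero_iff {x : V n} :
    outsideIndicator H x = 0 ↔ x = 0 ∨ x ∈ H := by
  simp [outsideIndicator, P, or_iff_not_imp_left]

open scoped Classical in
lemma outsideIndicator_of_ne_zero {x : V n} (hx : x ≠ 0) :
    outsideIndicator H x = if x ∈ H then 0 else 1 := by
  by_cases hxH : x ∈ H <;> simp [outsideIndicator, P, hx, hxH]

lemma IsH1.perpAdditive_outsideIndicator (hH : IsH1 H) : PerpAdditive (outsideIndicator H) := by
  intro x y hxy
  have h0 : outsideIndicator H 0 = 0 := outsideIndicator_apply_eq_zero_iff.mpr (Or.inl rfl)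
  by_cases hx : x = 0
  · rw [hx, zero_add, h0, zero_add]
  by_cases hy : y = 0
  · rw [hy, add_zero, h0, add_zero]
  by_cases hxy' : x = y
  · rw [hxy', ZModModule.add_self, h0, ZModModule.add_self]
  have hl : {x, y, x + y} ∈ Lines n := ⟨x, y, hx, hy, hxy', hxy, rfl⟩
  have hxy0 : x + y ≠ 0 := by
    rwa [Ne, add_eq_zero_iff_eq_neg, ZModModule.neg_eq_self]
  have hyz : y ≠ x + y := fun h => hx (by simpa using congrArg (· + y) h)
  have hxz : x ≠ x + y := fun h => hy (by simpa using congrArg (x + ·) h)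
  rw [outsideIndicator_of_ne_zero hx, outsideIndicator_of_ne_zero hy,
    outsideIndicator_of_ne_zero hxy0]
  rcases hH.2 _ hl with h1 | hsub
  · obtain ⟨a, ha⟩ := Set.ncard_eq_one.mp h1
    have hmem : ∀ w, w ∈ H ∧ (w = x ∨ w = y ∨ w = x + y) ↔ w = a := fun w => by
      simpa using Set.ext_iff.mp ha w
    -- exactly one of `x`, `y`, `x + y` lies in `H`
    have := hmem x; have := hmem y; have := hmem (x + y); have := hmem a
    split_ifs <;> grind
  · simp only [Set.insert_subset_iff, Set.singleton_subset_iff] at hsub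
    simp [hsub]

lemma IsH1.outsideIndicator_mem_range (hH : IsH1 H) : outsideIndicator H ∈ (hypFun n).range :=
  hH.perpAdditive_outsideIndicator.mem_range_hypFun

lemma mem_iff_outsideIndicator_eq_zero (hH : H ⊆ P n) {x : V n} :
    x ∈ H ↔ x ≠ 0 ∧ outsideIndicator H x = 0 := by
  rw [outsideIndicator_apply_eq_zero_iff]
  exact ⟨fun hx => ⟨hH hx, Or.inr hx⟩, fun ⟨hx, h⟩ => h.resolve_left hx⟩

lemma eq_of_outsideIndicator_eq {A B : Set (V n)} (hA : A ⊆ P n) (hB : B ⊆ P n)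
    (h : outsideIndicator A = outsideIndicator B) : A = B := by
  ext x
  rw [mem_iff_outsideIndicator_eq_zero hA, mem_iff_outsideIndicator_eq_zero hB, h]

lemma outsideIndicator_P : outsideIndicator (P n) = 0 := by
  ext; simp [outsideIndicator]

lemma IsHyperplane.outsideIndicator_ne_zero (hH : IsHyperplane H) : outsideIndicator H ≠ 0 :=
  fun h0 => hH.2 (eq_of_outsideIndicator_eq hH.1.1 subset_rfl (h0.trans outsideIndicator_P.symm))

lemma IsHyperplane.outsideIndicator_add_ne_zero {H' : Set (V n)} (hH : IsHyperplane H)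
    (hH' : IsHyperplane H') (hne : H ≠ H') : outsideIndicator H + outsideIndicator H' ≠ 0 :=
  fun h0 => hne (eq_of_outsideIndicator_eq hH.1.1 hH'.1.1 (CharTwo.add_eq_zero.mp h0))

lemma inter_eq_inter_of_outsideIndicator_add_eq_zero {A B C : Set (V n)} (hA : A ⊆ P n)
    (hB : B ⊆ P n) (hC : C ⊆ P n)
    (h : outsideIndicator A + outsideIndicator B + outsideIndicator C = 0) : A ∩ B = A ∩ C := by
  have hsum : outsideIndicator C = outsideIndicator A + outsideIndicator B :=
    (CharTwo.add_eq_zero.mp h).symm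
  ext x
  simp only [Set.mem_inter_iff, mem_iff_outsideIndicator_eq_zero hA,
    mem_iff_outsideIndicator_eq_zero hB, mem_iff_outsideIndicator_eq_zero hC, hsum, Pi.add_apply]
  grind

end Hyperplanes

lemma AddChar.map_sum_eq_prod {A M ι : Type*} [AddCommMonoid A] [CommMonoid M] (ψ : AddChar A M)
    (s : Finset ι) (f : ι → A) : ψ (∑ i ∈ s, f i) = ∏ i ∈ s, ψ (f i) := by
  induction s using Finset.cons_induction with
  | empty => simp
  | cons a s ha ih => rw [Finset.sum_cons, Finset.prod_cons, AddChar.map_add_eq_mul, ih]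

section CharacterSums
variable {n : ℕ}

def signChar : AddChar (ZMod 2) ℤ := AddChar.zmodChar 2 (ζ := -1) (by norm_num)

lemma signChar_one : signChar 1 = -1 :=
  rfl

lemma abs_signChar (a : ZMod 2) : |signChar a| = 1 := by
  rcases zmod_two_eq_zero_or_one a with rfl | rfl <;> simp [signChar_one]

lemma eq_zero_of_one_add_signChar_ne_zero {a : ZMod 2} (h : 1 + signChar a ≠ 0) : a = 0 :=
  (zmod_two_eq_zero_or_one a).resolve_right fun ha => h (by rw [ha, signChar_one]; norm_num)

lemma ne_zero_of_one_sub_signChar_ne_zero {a : ZMod 2} (h : 1 - signChar a ≠ 0) : a ≠ 0 :=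
  fun ha => h (by rw [ha, AddChar.map_zero_eq_one, sub_self])

def pairArrowEquiv (n : ℕ) : (Fin n → Fin 2 → ZMod 2) ≃ V n :=
  (Equiv.curry _ _ _).symm.trans ((pairEquiv n).arrowCongr (Equiv.refl _))

lemma Q0_pairArrowEquiv (y : Fin n → Fin 2 → ZMod 2) :
    Q0 (pairArrowEquiv n y) = ∑ i, y i 0 * y i 1 := by
  simp [Q0, pairArrowEquiv, ← pairEquiv_zero, ← pairEquiv_one]

lemma sum_signChar_Q0 : ∑ x : V n, signChar (Q0 x) = 2 ^ n := by
  have h2 : ∑ a : Fin 2 → ZMod 2, signChar (a 0 * a 1) = 2 := by decide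
  rw [← (pairArrowEquiv n).sum_comp, ← h2, Fintype.sum_pow]
  simp only [Q0_pairArrowEquiv, AddChar.map_sum_eq_prod]

lemma abs_sum_signChar_le {F : V n → ZMod 2} (hF : F ∈ (hypFun n).range) (hF0 : F ≠ 0) :
    |∑ x, signChar (F x)| ≤ 2 ^ n := by
  obtain ⟨⟨ε, p⟩, rfl⟩ := hF
  rcases zmod_two_eq_zero_or_one ε with rfl | rfl
  · let ψ : AddChar (V n) ℤ :=
      signChar.compAddMonoidHom (AddMonoidHom.mk' (sform p) (sform_add_right p))
    have hψ : ψ ≠ 1 := by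
      obtain ⟨w, hw⟩ := Function.ne_iff.mp hF0
      have hw1 : sform p w = 1 := by
        simpa [hypFun_apply] using (zmod_two_eq_zero_or_one _).resolve_left hw
      exact AddChar.ne_one_iff.mpr ⟨w, by simp [ψ, hw1, signChar_one]⟩
    have hsum : ∑ x, signChar (hypFun n (0, p) x) = ∑ x, ψ x := by simp [ψ, hypFun_apply]
    rw [hsum, AddChar.sum_eq_zero_of_ne_one hψ, abs_zero]
    positivity
  -- Completing the square: `Q0 x + ⟨p, x⟩ = Q0 (x + p) + Q0 p`.
  · have hsq : ∀ x, hypFun n (1, p) x = Q0 (x + p) + Q0 p := fun x => by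
      rw [hypFun_apply, Q0_add, sform_comm]; grind
    simp_rw [hsq, AddChar.map_add_eq_mul, ← Finset.sum_mul]
    rw [Fintype.sum_equiv (Equiv.addRight p) (fun x => signChar (Q0 (x + p)))
        (fun y => signChar (Q0 y)) fun _ => rfl,
      sum_signChar_Q0, abs_mul, abs_signChar, mul_one, abs_of_pos (by positivity)]

-- The summand is `8` where `F = G = 0 ≠ K` and `0` elsewhere.
lemma sum_one_add_mul_one_add_mul_one_sub_signChar {α : Type*} [Fintype α] (F G K : α → ZMod 2) :
    ∑ x, (1 + signChar (F x)) * (1 + signChar (G x)) * (1 - signChar (K x)) =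
      Fintype.card α + ∑ x, signChar (F x) + ∑ x, signChar (G x) + ∑ x, signChar ((F + G) x)
        - ∑ x, signChar (K x) - ∑ x, signChar ((F + K) x) - ∑ x, signChar ((G + K) x)
        - ∑ x, signChar ((F + G + K) x) := by
  have hpoint : ∀ x, (1 + signChar (F x)) * (1 + signChar (G x)) * (1 - signChar (K x)) =
      1 + signChar (F x) + signChar (G x) + signChar ((F + G) x) - signChar (K x)
        - signChar ((F + K) x) - signChar ((G + K) x) - signChar ((F + G + K) x) := fun x => by
    simp only [Pi.add_apply, AddChar.map_add_eq_mul]; ring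
  simp only [hpoint, Finset.sum_add_distrib, Finset.sum_sub_distrib, Finset.sum_const,
    Finset.card_univ, nsmul_eq_mul, mul_one]

lemma exists_eq_zero_eq_zero_ne_zero (hn : 3 ≤ n) {F G K : V n → ZMod 2}
    (hF : F ∈ (hypFun n).range) (hG : G ∈ (hypFun n).range) (hK : K ∈ (hypFun n).range)
    (hF0 : F ≠ 0) (hG0 : G ≠ 0) (hK0 : K ≠ 0)
    (hFG : F + G ≠ 0) (hFK : F + K ≠ 0) (hGK : G + K ≠ 0) (hFGK : F + G + K ≠ 0) :
    ∃ x, F x = 0 ∧ G x = 0 ∧ K x ≠ 0 := by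
  have hcard : (Fintype.card (V n) : ℤ) = 2 ^ n * 2 ^ n := by
    simp [← pow_add, two_mul]
  have h8 : (2 : ℤ) ^ 3 ≤ 2 ^ n := pow_le_pow_right₀ (by norm_num) hn
  have hb := fun (H : V n → ZMod 2) hH hH0 => abs_le.mp (abs_sum_signChar_le (F := H) hH hH0)
  have hpos : 0 < ∑ x, (1 + signChar (F x)) * (1 + signChar (G x)) * (1 - signChar (K x)) := by
    rw [sum_one_add_mul_one_add_mul_one_sub_signChar, hcard]
    have := hb _ hF hF0; have := hb _ hG hG0; have := hb _ hK hK0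
    have := hb _ (add_mem hF hG) hFG; have := hb _ (add_mem hF hK) hFK
    have := hb _ (add_mem hG hK) hGK; have := hb _ (add_mem (add_mem hF hG) hK) hFGK
    nlinarith
  obtain ⟨x, -, hx⟩ := Finset.exists_ne_zero_of_sum_ne_zero hpos.ne'
  simp only [mul_ne_zero_iff] at hx
  exact ⟨x, eq_zero_of_one_add_signChar_ne_zero hx.1.1, eq_zero_of_one_add_signChar_ne_zero hx.1.2,
    ne_zero_of_one_sub_signChar_ne_zero hx.2⟩

end CharacterSums

theorem stmt10 (n : ℕ) (hn : 3 ≤ n) (A B C : Set (V n))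
    (hA : IsHyperplane A) (hB : IsHyperplane B) (hC : IsHyperplane C)
    (hAB : A ≠ B) (hAC : A ≠ C) (hBC : B ≠ C)
    (h : A ∩ B ⊆ C) : A ∩ B = A ∩ C := by
  by_cases hABC : outsideIndicator A + outsideIndicator B + outsideIndicator C = 0
  · exact inter_eq_inter_of_outsideIndicator_add_eq_zero hA.1.1 hB.1.1 hC.1.1 hABC
  have hCrange := hC.1.outsideIndicator_mem_range
  obtain ⟨x, hxA, hxB, hxC⟩ := exists_eq_zero_eq_zero_ne_zero hn
    hA.1.outsideIndicator_mem_range hB.1.outsideIndicator_mem_range hCrange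
    hA.outsideIndicator_ne_zero hB.outsideIndicator_ne_zero hC.outsideIndicator_ne_zero
    (hA.outsideIndicator_add_ne_zero hB hAB) (hA.outsideIndicator_add_ne_zero hC hAC)
    (hB.outsideIndicator_add_ne_zero hC hBC) hABC
  have hx0 : x ≠ 0 := by
    rintro rfl
    exact hxC (apply_zero_of_mem_range hCrange)
  have hxAB : x ∈ A ∩ B := ⟨(mem_iff_outsideIndicator_eq_zero hA.1.1).mpr ⟨hx0, hxA⟩,
    (mem_iff_outsideIndicator_eq_zero hB.1.1).mpr ⟨hx0, hxB⟩⟩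
  exact absurd ((mem_iff_outsideIndicator_eq_zero hC.1.1).mp (h hxAB)).2 hxC
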